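/- Let m ≥ 1 be an integer and r0 > 0 a real number. Then the integral ∫_0^{r0} J_m(r)² · r dr is positive, and J_m(r0) / √(∫_0^{r0} J_m(r)² · r dr) equals (√(2m+2) · r0^{−1} + I_3(m, r0)) / √(1 + I_4(m, r0)), where J_m is the Bessel function of the first kind of integer order m defined by its power series. -/

import Mathlib

open Real

/-- Bessel function of the first kind, defined by its power series. -/
noncomputable def besselJ (α : ℝ) (x : ℝ) : ℝ :=
  ∑' k : ℕ,
    ((-1 : ℝ) ^ k / ((Nat.factorial k : ℝ) * Real.Gamma ((k : ℝ) + α + 1))) *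
      (x / 2) ^ (2 * (k : ℝ) + α)

/-- `I₃(m, r₀)` from the paper. -/
noncomputable def I3 (m : ℕ) (r0 : ℝ) : ℝ :=
  ∑' k : ℕ,
    ((-1 : ℝ) ^ (k + 1) / (Nat.factorial (k + 1) : ℝ)) *
      (Real.Gamma ((m : ℝ) + 1) * Real.sqrt (2 * (m : ℝ) + 2) /
        Real.Gamma ((m : ℝ) + ((k : ℝ) + 1) + 1)) *
      (r0 / 2) ^ (2 * (k + 1)) * r0⁻¹

/-- `I₄(m, r₀)` from the paper. -/
noncomputable def I4 (m : ℕ) (r0 : ℝ) : ℝ :=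
  ∑' k : ℕ,
    (-1 : ℝ) ^ (k + 1) * (r0 / 2) ^ (2 * (k + 1)) *
      ((2 * (m : ℝ) + 2) / (2 * (m : ℝ) + 2 * ((k : ℝ) + 1) + 2)) *
      ∑ p ∈ Finset.HasAntidiagonal.antidiagonal (k + 1),
        Real.Gamma ((m : ℝ) + 1) ^ 2 /
          ((Nat.factorial p.1 : ℝ) * (Nat.factorial p.2 : ℝ) *
            Real.Gamma ((m : ℝ) + (p.1 : ℝ) + 1) * Real.Gamma ((m : ℝ) + (p.2 : ℝ) + 1))

/-!
For `x > 0` the power series of `J_α` factors as `J_α(x) = (x/2)^α / Γ(α+1) * S_α((x/2)^2)`,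
where `S_α = besselSeries α`, `S_α(y) = ∑ₖ (-1)^k Γ(α+1) / (k! Γ(α+k+1)) y^k`, is entire with
`S_α(0) = 1`. The
substitution `v = (r/2)^2` turns `∫₀^{r₀} J_α(r)^2 r dr` into
`2 / Γ(α+1)^2 * ∫₀^{(r₀/2)^2} v^α S_α(v)^2 dv`, which, after squaring `S_α` by the Cauchy product,
integrates termwise. The numerator and the square root of the integral become
`√(2α+2) r₀⁻¹ S_α((r₀/2)^2)` and a common factor times `√(1 + I₄)`: `I₃` and `I₄` are exactly the
tails `k ≥ 1` of these two series. The integral is positive because `|S_α(y) - 1| ≤ exp y - 1 < 1`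
for `0 ≤ y < log 2`.
-/

open Finset MeasureTheory
open scoped Nat

variable {α : ℝ}

lemma integral_rpow_add_nat {s T : ℝ} (hs : -1 < s) (hT : 0 ≤ T) (n : ℕ) :
    ∫ v in (0 : ℝ)..T, v ^ (s + n) = T ^ (s + 1) * T ^ n / (s + n + 1) := by
  rw [integral_rpow (.inl (by linarith [n.cast_nonneg (α := ℝ)])),
    zero_rpow (by linarith [n.cast_nonneg (α := ℝ)]), sub_zero, add_right_comm,
    rpow_add' hT (by linarith [n.cast_nonneg (α := ℝ)]), rpow_natCast]

theorem integral_rpow_mul_tsum {c : ℕ → ℝ} {s T : ℝ} (hs : -1 < s) (hT : 0 ≤ T)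
    (hc : Summable fun n => ‖c n * T ^ n‖) :
    ∫ v in (0 : ℝ)..T, v ^ s * ∑' n, c n * v ^ n =
      T ^ (s + 1) * ∑' n, c n * T ^ n / (s + n + 1) := by
  have hs' : ∀ n : ℕ, -1 < s + n := fun n => by linarith [n.cast_nonneg (α := ℝ)]
  have hint : ∀ n : ℕ, IntegrableOn (fun v => c n * v ^ (s + n)) (Set.Ioc 0 T) :=
    fun n => ((intervalIntegral.intervalIntegrable_rpow' (hs' n)).const_mul _).1
  have hnorm : ∀ n : ℕ, ∫ v in Set.Ioc 0 T, ‖c n * v ^ (s + n)‖ =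
      ‖c n‖ * (T ^ (s + 1) * T ^ n / (s + n + 1)) := by
    intro n
    rw [setIntegral_congr_fun measurableSet_Ioc fun v hv => by
        rw [norm_mul, Real.norm_of_nonneg (rpow_nonneg hv.1.le _)],
      integral_const_mul, ← intervalIntegral.integral_of_le hT, integral_rpow_add_nat hs hT]
  calc ∫ v in (0 : ℝ)..T, v ^ s * ∑' n, c n * v ^ n
      = ∫ v in Set.Ioc 0 T, ∑' n, c n * v ^ (s + n) := by
        rw [intervalIntegral.integral_of_le hT]
        refine setIntegral_congr_fun measurableSet_Ioc fun v hv => ?_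
        simp only [← tsum_mul_left, rpow_add hv.1, rpow_natCast]
        exact tsum_congr fun n => by ring
    _ = ∑' n, ∫ v in Set.Ioc 0 T, c n * v ^ (s + n) := by
        refine (integral_tsum_of_summable_integral_norm hint ?_).symm
        simp only [hnorm]
        refine .of_nonneg_of_le (fun n => mul_nonneg (norm_nonneg _)
          (div_nonneg (by positivity) (by linarith [hs' n]))) (fun n => ?_)
          (hc.mul_left (T ^ (s + 1) / (s + 1)))
        rw [norm_mul, norm_pow, Real.norm_of_nonneg hT]
        have : s + 1 ≤ s + n + 1 := by linarith [n.cast_nonneg (α := ℝ)]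
        calc ‖c n‖ * (T ^ (s + 1) * T ^ n / (s + n + 1))
            = ‖c n‖ * T ^ n * T ^ (s + 1) / (s + n + 1) := by ring
          _ ≤ ‖c n‖ * T ^ n * T ^ (s + 1) / (s + 1) := by gcongr; linarith
          _ = _ := by ring
    _ = T ^ (s + 1) * ∑' n, c n * T ^ n / (s + n + 1) := by
        rw [← tsum_mul_left]
        refine tsum_congr fun n => ?_
        rw [integral_const_mul, ← intervalIntegral.integral_of_le hT, integral_rpow_add_nat hs hT]
        ring

noncomputable def besselCoeff (α : ℝ) (k : ℕ) : ℝ :=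
  (-1) ^ k * Gamma (α + 1) / (k ! * Gamma (α + k + 1))

noncomputable def besselSeries (α y : ℝ) : ℝ :=
  ∑' k, besselCoeff α k * y ^ k

lemma Gamma_add_one_le_Gamma_add_nat_add_one (hα : 0 ≤ α) (k : ℕ) :
    Gamma (α + 1) ≤ Gamma (α + k + 1) := by
  induction k with
  | zero => simp
  | succ k ih =>
    have hpos : 0 < Gamma (α + k + 1) := Gamma_pos_of_pos (by positivity)
    rw [Nat.cast_succ, ← add_assoc, Gamma_add_one (s := α + k + 1) (by positivity)]
    nlinarith

lemma besselCoeff_zero (hα : -1 < α) : besselCoeff α 0 = 1 := by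
  have : Gamma (α + 1) ≠ 0 := (Gamma_pos_of_pos (by linarith)).ne'
  simp [besselCoeff, this]

lemma abs_besselCoeff_le (hα : 0 ≤ α) (k : ℕ) : |besselCoeff α k| ≤ (k ! : ℝ)⁻¹ := by
  have hΓ : 0 < Gamma (α + 1) := Gamma_pos_of_pos (by positivity)
  have hΓk : 0 < Gamma (α + k + 1) := Gamma_pos_of_pos (by positivity)
  rw [besselCoeff, abs_div, abs_mul, abs_pow, abs_neg, abs_one, one_pow, one_mul,
    abs_of_pos hΓ, abs_of_pos (by positivity), div_le_iff₀ (by positivity),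
    inv_mul_cancel_left₀ (by positivity)]
  exact Gamma_add_one_le_Gamma_add_nat_add_one hα k

lemma norm_besselCoeff_mul_pow_le (hα : 0 ≤ α) (k : ℕ) (y : ℝ) :
    ‖besselCoeff α k * y ^ k‖ ≤ |y| ^ k / k ! := by
  rw [norm_mul, norm_pow, Real.norm_eq_abs, Real.norm_eq_abs, div_eq_inv_mul]
  exact mul_le_mul_of_nonneg_right (abs_besselCoeff_le hα k) (by positivity)

lemma summable_norm_besselCoeff_mul_pow (hα : 0 ≤ α) (y : ℝ) :
    Summable fun k => ‖besselCoeff α k * y ^ k‖ :=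
  .of_nonneg_of_le (fun _ => norm_nonneg _) (norm_besselCoeff_mul_pow_le hα · y)
    (Real.summable_pow_div_factorial |y|)

lemma continuous_besselSeries (hα : 0 ≤ α) : Continuous (besselSeries α) := by
  refine continuous_iff_continuousAt.2 fun y => ?_
  have hR : ContinuousOn (besselSeries α) (Set.Icc (-(|y| + 1)) (|y| + 1)) :=
    continuousOn_tsum (fun k => (continuous_const.mul (continuous_pow k)).continuousOn)
      (Real.summable_pow_div_factorial (|y| + 1)) fun k v hv =>
        (norm_besselCoeff_mul_pow_le hα k v).trans (by gcongr; exact abs_le.2 hv)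
  exact hR.continuousAt (Icc_mem_nhds (by linarith [neg_abs_le y]) (by linarith [le_abs_self y]))

lemma abs_besselSeries_sub_one_le (hα : 0 ≤ α) {y : ℝ} (hy : 0 ≤ y) :
    |besselSeries α y - 1| ≤ exp y - 1 := by
  have hexp : HasSum (fun k => y ^ (k + 1) / (k + 1)!) (exp y - 1) := by
    have := (hasSum_nat_add_iff' 1).2 (Real.exp_eq_exp_ℝ ▸ NormedSpace.expSeries_div_hasSum_exp y)
    simpa using this
  rw [besselSeries, (summable_norm_besselCoeff_mul_pow hα y).of_norm.tsum_eq_zero_add,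
    besselCoeff_zero (by linarith), pow_zero, mul_one, add_sub_cancel_left, ← Real.norm_eq_abs]
  exact tsum_of_norm_bounded hexp fun k => by
    simpa [abs_of_nonneg hy] using norm_besselCoeff_mul_pow_le hα (k + 1) y

lemma besselSeries_pos (hα : 0 ≤ α) {y : ℝ} (hy₀ : 0 ≤ y) (hy : y < log 2) :
    0 < besselSeries α y := by
  have hexp : exp y < 2 := (exp_lt_exp.2 hy).trans_eq (exp_log two_pos)
  linarith [(abs_le.1 (abs_besselSeries_sub_one_le hα hy₀)).1]

lemma besselJ_eq_mul_besselSeries (hα : -1 < α) {x : ℝ} (hx : 0 < x) :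
    besselJ α x = (x / 2) ^ α / Gamma (α + 1) * besselSeries α ((x / 2) ^ 2) := by
  have hΓ : Gamma (α + 1) ≠ 0 := (Gamma_pos_of_pos (by linarith)).ne'
  rw [besselJ, besselSeries, ← tsum_mul_left]
  refine tsum_congr fun k => ?_
  rw [rpow_add (by positivity), show 2 * (k : ℝ) = ((2 * k : ℕ) : ℝ) by push_cast; ring,
    rpow_natCast, pow_mul, besselCoeff, add_comm (k : ℝ) α]
  field_simp

noncomputable def besselSqCoeff (α : ℝ) (n : ℕ) : ℝ :=
  ∑ p ∈ antidiagonal n, besselCoeff α p.1 * besselCoeff α p.2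

lemma sum_antidiagonal_besselCoeff_mul_pow (α y : ℝ) (n : ℕ) :
    ∑ p ∈ antidiagonal n, besselCoeff α p.1 * y ^ p.1 * (besselCoeff α p.2 * y ^ p.2) =
      besselSqCoeff α n * y ^ n := by
  rw [besselSqCoeff, sum_mul]
  refine sum_congr rfl fun p hp => ?_
  rw [← mem_antidiagonal.1 hp, pow_add]
  ring

lemma besselSeries_sq (hα : 0 ≤ α) (y : ℝ) :
    besselSeries α y ^ 2 = ∑' n, besselSqCoeff α n * y ^ n := by
  simp only [sq, besselSeries, ← sum_antidiagonal_besselCoeff_mul_pow,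
    tsum_mul_tsum_eq_tsum_sum_antidiagonal_of_summable_norm
      (summable_norm_besselCoeff_mul_pow hα y) (summable_norm_besselCoeff_mul_pow hα y)]

lemma summable_norm_besselSqCoeff_mul_pow (hα : 0 ≤ α) (y : ℝ) :
    Summable fun n => ‖besselSqCoeff α n * y ^ n‖ := by
  simpa only [sum_antidiagonal_besselCoeff_mul_pow] using
    summable_norm_sum_mul_antidiagonal_of_summable_norm
      (summable_norm_besselCoeff_mul_pow hα y) (summable_norm_besselCoeff_mul_pow hα y)

lemma integral_besselJ_sq_mul_self_eq_integral_besselSeries (hα : -1 < α) {r₀ : ℝ} (hr₀ : 0 ≤ r₀) :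
    ∫ r in (0 : ℝ)..r₀, besselJ α r ^ 2 * r =
      2 / Gamma (α + 1) ^ 2 * ∫ v in (0 : ℝ)..(r₀ / 2) ^ 2, v ^ α * besselSeries α v ^ 2 := by
  have hsubst := intervalIntegral.integral_comp_mul_deriv_of_deriv_nonneg
    (f := fun r => (r / 2) ^ 2) (f' := fun r => r / 2) (a := 0) (b := r₀)
    (g := fun v => v ^ α * besselSeries α v ^ 2) (by fun_prop)
    (fun r _ => (((hasDerivAt_id' r).div_const 2).fun_pow 2).congr_deriv (by norm_num; ring))
    (fun r hr => by simp only [min_eq_left hr₀] at hr; linarith [hr.1])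
  rw [show ((0 : ℝ) / 2) ^ 2 = 0 by norm_num] at hsubst
  rw [← hsubst, ← intervalIntegral.integral_const_mul]
  refine intervalIntegral.integral_congr_ae (.of_forall fun r hr => ?_)
  rw [Set.uIoc_of_le hr₀] at hr
  have hΓ : Gamma (α + 1) ≠ 0 := (Gamma_pos_of_pos (by linarith)).ne'
  simp only [Function.comp_apply, besselJ_eq_mul_besselSeries hα hr.1,
    ← rpow_pow_comm (by linarith [hr.1] : 0 ≤ r / 2)]
  field_simp

lemma integral_besselJ_sq_mul_self_pos (hα : 0 ≤ α) {r₀ : ℝ} (hr₀ : 0 < r₀) :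
    0 < ∫ r in (0 : ℝ)..r₀, besselJ α r ^ 2 * r := by
  have hΓ : 0 < Gamma (α + 1) := Gamma_pos_of_pos (by linarith)
  rw [integral_besselJ_sq_mul_self_eq_integral_besselSeries (by linarith) hr₀.le]
  refine mul_pos (by positivity) (intervalIntegral.integral_pos (by positivity)
    ((continuous_rpow_const hα).mul ((continuous_besselSeries hα).pow 2)).continuousOn
    (fun v hv => by have := hv.1; positivity) ?_)
  set c := min ((r₀ / 2) ^ 2) (1 / 2)
  have hc : 0 < c := lt_min (by positivity) one_half_pos
  have hc_log : c < log 2 := (min_le_right _ _).trans_lt (by linarith [log_two_gt_d9])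
  exact ⟨c, ⟨hc.le, min_le_left _ _⟩,
    mul_pos (rpow_pos_of_pos hc α) (pow_pos (besselSeries_pos hα hc.le hc_log) 2)⟩

lemma integral_besselJ_sq_mul_self (hα : 0 ≤ α) {r₀ : ℝ} (hr₀ : 0 ≤ r₀) :
    ∫ r in (0 : ℝ)..r₀, besselJ α r ^ 2 * r =
      ((r₀ / 2) ^ α * r₀ / (Gamma (α + 1) * √(2 * α + 2))) ^ 2 *
        ∑' n : ℕ, besselSqCoeff α n * ((r₀ / 2) ^ 2) ^ n * ((α + 1) / (α + n + 1)) := by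
  have hΓ : 0 < Gamma (α + 1) := Gamma_pos_of_pos (by linarith)
  rw [integral_besselJ_sq_mul_self_eq_integral_besselSeries (by linarith) hr₀]
  simp only [besselSeries_sq hα]
  rw [integral_rpow_mul_tsum (by linarith) (by positivity)
      (summable_norm_besselSqCoeff_mul_pow hα _), rpow_add' (by positivity) (by linarith), rpow_one, ← rpow_pow_comm (by positivity)]
  simp only [← tsum_mul_left]
  refine tsum_congr fun n => ?_
  have hn : 0 < α + n + 1 := by positivity
  simp only [div_pow, mul_pow, sq_sqrt (by linarith : (0 : ℝ) ≤ 2 * α + 2)]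
  field_simp

lemma sqrt_mul_inv_add_I3_eq (m : ℕ) (r₀ : ℝ) :
    √(2 * (m : ℝ) + 2) * r₀⁻¹ + I3 m r₀ =
      √(2 * (m : ℝ) + 2) * r₀⁻¹ * besselSeries m ((r₀ / 2) ^ 2) := by
  rw [besselSeries,
    (summable_norm_besselCoeff_mul_pow m.cast_nonneg _).of_norm.tsum_eq_zero_add,
    besselCoeff_zero (by linarith [m.cast_nonneg (α := ℝ)]), pow_zero, mul_one, mul_add, mul_one,
    I3, ← tsum_mul_left]
  congr 1
  refine tsum_congr fun k => ?_
  rw [besselCoeff, ← pow_mul]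
  push_cast
  ring

lemma besselSqCoeff_zero (hα : -1 < α) : besselSqCoeff α 0 = 1 := by
  simp [besselSqCoeff, besselCoeff_zero hα]

lemma one_add_I4_eq (m : ℕ) (r₀ : ℝ) :
    1 + I4 m r₀ =
      ∑' n : ℕ, besselSqCoeff m n * ((r₀ / 2) ^ 2) ^ n * ((m + 1) / (m + n + 1)) := by
  have hm : (0 : ℝ) ≤ m := m.cast_nonneg
  have hsum : Summable fun n : ℕ =>
      besselSqCoeff m n * ((r₀ / 2) ^ 2) ^ n * ((m + 1) / (m + n + 1)) := by
    refine .of_norm_bounded (summable_norm_besselSqCoeff_mul_pow hm ((r₀ / 2) ^ 2)) fun n => ?_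
    rw [norm_mul (_ * _)]
    refine mul_le_of_le_one_right (norm_nonneg _) ?_
    rw [Real.norm_of_nonneg (by positivity), div_le_one (by positivity)]
    linarith [n.cast_nonneg (α := ℝ)]
  rw [hsum.tsum_eq_zero_add, besselSqCoeff_zero (by linarith), I4]
  simp only [pow_zero, one_mul, Nat.cast_zero, add_zero, div_self (by positivity : (m : ℝ) + 1 ≠ 0)]
  congr 1
  refine tsum_congr fun k => ?_
  rw [besselSqCoeff, sum_mul, sum_mul, mul_sum]
  refine sum_congr rfl fun p hp => ?_
  have hp' : p.1 + p.2 = k + 1 := mem_antidiagonal.1 hp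
  have hk : (k : ℝ) + 1 = p.1 + p.2 := by exact_mod_cast hp'.symm
  simp only [besselCoeff, ← pow_mul, ← hp', hk, pow_add, Nat.cast_add]
  field_simp
  ring

theorem besselJ_ratio_eq_2d_general (m : ℕ) (r0 : ℝ) (hr0 : 0 < r0) :
    0 < ∫ r in (0 : ℝ)..r0, besselJ (m : ℝ) r ^ 2 * r ∧
    besselJ (m : ℝ) r0 / Real.sqrt (∫ r in (0 : ℝ)..r0, besselJ (m : ℝ) r ^ 2 * r) =
      (Real.sqrt (2 * (m : ℝ) + 2) * r0⁻¹ + I3 m r0) / Real.sqrt (1 + I4 m r0) := by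
  have hm : (0 : ℝ) ≤ m := m.cast_nonneg
  have hpos := integral_besselJ_sq_mul_self_pos hm hr0
  refine ⟨hpos, ?_⟩
  rw [integral_besselJ_sq_mul_self hm hr0.le, ← one_add_I4_eq] at hpos ⊢
  have hI4 : 0 < 1 + I4 m r0 := pos_of_mul_pos_right hpos (sq_nonneg _)
  have hΓ : 0 < Gamma (m + 1) := Gamma_pos_of_pos (by linarith)
  rw [besselJ_eq_mul_besselSeries (by linarith) hr0, sqrt_mul_inv_add_I3_eq,
    sqrt_mul (sq_nonneg _), sqrt_sq (by positivity)]
  field_simp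

theorem besselJ_ratio_eq_2d (m : ℕ) (hm : 1 ≤ m) (r0 : ℝ) (hr0 : 0 < r0) :
    0 < ∫ r in (0 : ℝ)..r0, besselJ (m : ℝ) r ^ 2 * r ∧
    besselJ (m : ℝ) r0 / Real.sqrt (∫ r in (0 : ℝ)..r0, besselJ (m : ℝ) r ^ 2 * r) =
      (Real.sqrt (2 * (m : ℝ) + 2) * r0⁻¹ + I3 m r0) / Real.sqrt (1 + I4 m r0) :=
  besselJ_ratio_eq_2d_general m r0 hr0
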